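/- arXiv:gr-qc/0112049 — 3 statements merged into one kernel-verified Lean document; each statement's English description precedes it below -/
import Mathlib

section
/- Let t₀ > 0 and let y : [t₀, ∞) → ℝ be a C¹ function with 0 < y(t) < 1 for all t, satisfying the differential inequality y′(t) ≤ −(1/t)·(y(t) − M₁·y(t)^{3/2}) for a constant M₁ > 0, and suppose z₀ := y(t₀)^{1/2} ≤ 1/(2M₁). Then y(t) − M₁·y(t)^{3/2} > 0 for all t and t·y(t) ≤ 4·t₀·y(t₀) for all t ≥ t₀. -/
/-- Decay of the total corrected energy: if `y` is `C¹` on `[t₀,∞)` with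
`0 < y < 1`, satisfies `y′ ≤ −(1/t)(y − M₁ y^{3/2})`, and
`√(y t₀) ≤ 1/(2M₁)`, then `y − M₁ y^{3/2} > 0` and `t·y(t) ≤ 4·t₀·y(t₀)`. -/
theorem stmt_6 (t₀ M₁ : ℝ) (ht₀ : 0 < t₀) (hM₁ : 0 < M₁)
    (y y' : ℝ → ℝ)
    (hy : ∀ t, t₀ ≤ t → 0 < y t ∧ y t < 1)
    (hderiv : ∀ t, t₀ ≤ t → HasDerivAt y (y' t) t)
    (hcont : ContinuousOn y' (Set.Ici t₀))
    (hineq : ∀ t, t₀ ≤ t → y' t ≤ -(1 / t) * (y t - M₁ * y t ^ ((3 : ℝ) / 2)))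
    (hz₀ : Real.sqrt (y t₀) ≤ 1 / (2 * M₁)) :
    (∀ t, t₀ ≤ t → 0 < y t - M₁ * y t ^ ((3 : ℝ) / 2)) ∧
    (∀ t, t₀ ≤ t → t * y t ≤ 4 * t₀ * y t₀) := by
  set p : ℝ := -(1:ℝ)/2 with hp
  have hpm : p - 1 = -((3:ℝ)/2) := by rw [hp]; norm_num
  set u : ℝ → ℝ := fun s => y s ^ p with hu_def
  set h : ℝ → ℝ := fun s => (u s - M₁) * s ^ p with hh_def
  have hypos : ∀ t, t₀ ≤ t → 0 < y t := fun t ht => (hy t ht).1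
  have htpos : ∀ t, t₀ ≤ t → 0 < t := fun t ht => lt_of_lt_of_le ht₀ ht
  -- rewriting s ^ p as (√s)⁻¹
  have hrp : ∀ s : ℝ, 0 < s → s ^ p = (Real.sqrt s)⁻¹ := by
    intro s hs
    rw [Real.sqrt_eq_rpow, hp, show (-(1:ℝ)/2) = -((1:ℝ)/2) by norm_num,
      Real.rpow_neg hs.le]
  have hu' : ∀ t, t₀ ≤ t → HasDerivAt u (y' t * p * y t ^ (p - 1)) t :=
    fun t ht => (hderiv t ht).rpow_const (Or.inl (ne_of_gt (hypos t ht)))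
  have hh' : ∀ t, t₀ ≤ t →
      HasDerivAt h (y' t * p * y t ^ (p - 1) * t ^ p + (u t - M₁) * (p * t ^ (p - 1))) t :=
    fun t ht => ((hu' t ht).sub_const M₁).mul
      (Real.hasDerivAt_rpow_const (Or.inl (ne_of_gt (htpos t ht))))
  -- the derivative of h is nonnegative
  have hH : ∀ t, t₀ ≤ t →
      0 ≤ y' t * p * y t ^ (p - 1) * t ^ p + (u t - M₁) * (p * t ^ (p - 1)) := by
    intro t ht
    have hyt := hypos t ht
    have htp := htpos t ht
    have hq := hineq t ht
    have e0 : (0:ℝ) < y t ^ (p - 1) := Real.rpow_pos_of_pos hyt _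
    have e0' : (0:ℝ) < t ^ p := Real.rpow_pos_of_pos htp _
    have e0'' : (0:ℝ) < t ^ (p - 1) := Real.rpow_pos_of_pos htp _
    have e1 : y t ^ (p - 1) * y t = y t ^ p := by
      nth_rewrite 2 [← Real.rpow_one (y t)]
      rw [← Real.rpow_add hyt]
      ring_nf
    have e2 : y t ^ (p - 1) * y t ^ ((3:ℝ)/2) = 1 := by
      rw [← Real.rpow_add hyt, hpm]
      norm_num
    have e3 : t ^ (p - 1) * t = t ^ p := by
      nth_rewrite 2 [← Real.rpow_one t]
      rw [← Real.rpow_add htp]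
      ring_nf
    -- key : u' ≥ (1/(2t)) (u - M₁)
    have key : (1/(2*t)) * (u t - M₁) ≤ y' t * p * y t ^ (p - 1) := by
      have hmul := mul_le_mul_of_nonneg_right hq
        (le_of_lt (mul_pos (by norm_num : (0:ℝ) < 1/2) e0))
      have hut : u t = y t ^ p := rfl
      rw [hp] at hmul ⊢
      have expand : -(1 / t) * (y t - M₁ * y t ^ ((3:ℝ)/2)) * (1/2 * y t ^ (-(1:ℝ)/2 - 1))
          = (1/(2*t)) * (M₁ * (y t ^ (-(1:ℝ)/2 - 1) * y t ^ ((3:ℝ)/2))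
              - (y t ^ (-(1:ℝ)/2 - 1) * y t)) := by
        field_simp
        ring
      rw [expand] at hmul
      rw [hp] at e1 e2
      rw [e1, e2] at hmul
      rw [hut, hp]
      nlinarith [hmul]
    -- combine: the two terms cancel
    have e4 : (1/(2*t)) * t ^ p = (1/2) * t ^ (p - 1) := by
      rw [← e3]
      field_simp
    have hcomb := mul_le_mul_of_nonneg_right key (le_of_lt e0')
    have hpe : p = -(1:ℝ)/2 := hp
    have e5 : 1/(2*t) * (u t - M₁) * t ^ p = -((u t - M₁) * (p * t ^ (p-1))) := by
      rw [hpe] at *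
      linear_combination (u t - M₁) * e4
    have h6 : -((u t - M₁) * (p * t ^ (p - 1))) ≤ y' t * p * y t ^ (p - 1) * t ^ p :=
      e5 ▸ hcomb
    linarith [h6]
  -- h is monotone on Ici t₀
  have hmono : MonotoneOn h (Set.Ici t₀) := by
    apply monotoneOn_of_deriv_nonneg (convex_Ici t₀)
    · exact fun t ht => ((hh' t ht).continuousAt).continuousWithinAt
    · intro x hx
      rw [interior_Ici] at hx
      exact ((hh' x (le_of_lt hx)).differentiableAt).differentiableWithinAt
    · intro x hx
      rw [interior_Ici] at hx
      rw [(hh' x (le_of_lt hx)).deriv]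
      exact hH x (le_of_lt hx)
  -- u t = (√(y t))⁻¹ and u t₀ ≥ 2 M₁
  have huinv : ∀ t, t₀ ≤ t → u t = (Real.sqrt (y t))⁻¹ :=
    fun t ht => hrp (y t) (hypos t ht)
  have hy0 := hypos t₀ le_rfl
  have hsq0 : (0:ℝ) < Real.sqrt (y t₀) := Real.sqrt_pos.mpr hy0
  have hu0ge : 2 * M₁ ≤ u t₀ := by
    rw [huinv t₀ le_rfl]
    have hb1 : Real.sqrt (y t₀) * (2 * M₁) ≤ 1 :=
      (le_div_iff₀ (by positivity)).mp hz₀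
    have hinv : (Real.sqrt (y t₀))⁻¹ * Real.sqrt (y t₀) = 1 :=
      inv_mul_cancel₀ (ne_of_gt hsq0)
    nlinarith [hb1, hinv, hsq0, inv_pos.mpr hsq0]
  -- fundamental estimate
  have main : ∀ t, t₀ ≤ t → (u t₀ - M₁) * t₀ ^ p ≤ (u t - M₁) * t ^ p :=
    fun t ht => hmono Set.self_mem_Ici ht ht
  -- u t ≥ 2 M₁ for all t
  have hut2M : ∀ t, t₀ ≤ t → 2 * M₁ ≤ u t := by
    intro t ht
    have h1 := main t ht
    have htp := htpos t ht
    have h2 : t ^ p ≤ t₀ ^ p := by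
      rw [hp]
      exact Real.rpow_le_rpow_of_nonpos ht₀ ht (by norm_num)
    have e0' : (0:ℝ) < t ^ p := Real.rpow_pos_of_pos htp _
    have e0'' : (0:ℝ) < t₀ ^ p := Real.rpow_pos_of_pos ht₀ _
    have hM' : M₁ ≤ u t₀ - M₁ := by linarith
    nlinarith [mul_le_mul_of_nonneg_left h2 hM₁.le]
  constructor
  · -- first conclusion
    intro t ht
    have hyt := hypos t ht
    have hsqt : (0:ℝ) < Real.sqrt (y t) := Real.sqrt_pos.mpr hyt
    have h1 : (Real.sqrt (y t))⁻¹ ≥ 2 * M₁ := by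
      rw [← huinv t ht]; exact hut2M t ht
    have h2 : M₁ * Real.sqrt (y t) ≤ 1/2 := by
      have := mul_le_mul_of_nonneg_right h1 hsqt.le
      rw [inv_mul_cancel₀ (ne_of_gt hsqt)] at this
      nlinarith
    have e32 : y t ^ ((3:ℝ)/2) = y t * Real.sqrt (y t) := by
      rw [Real.sqrt_eq_rpow, show ((3:ℝ)/2) = 1 + 1/2 by norm_num,
        Real.rpow_add hyt, Real.rpow_one]
    rw [e32]
    nlinarith [hsqt]
  · -- second conclusion
    intro t ht
    have hyt := hypos t ht
    have htp := htpos t ht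
    have hsqt : (0:ℝ) < Real.sqrt (y t) := Real.sqrt_pos.mpr hyt
    have hst : (0:ℝ) < Real.sqrt t := Real.sqrt_pos.mpr htp
    have hst0 : (0:ℝ) < Real.sqrt t₀ := Real.sqrt_pos.mpr ht₀
    have h1 := main t ht
    rw [huinv t ht, huinv t₀ le_rfl, hrp t htp, hrp t₀ ht₀] at h1
    have hb := hu0ge
    rw [huinv t₀ le_rfl] at hb
    -- abbreviations
    set a := Real.sqrt (y t)
    set b := Real.sqrt (y t₀)
    set s := Real.sqrt t
    set s₀ := Real.sqrt t₀
    -- h1 : (b⁻¹ - M₁) * s₀⁻¹ ≤ (a⁻¹ - M₁) * s⁻¹,  hb : 2 M₁ ≤ b⁻¹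
    -- deduce : (2*b*s₀)⁻¹ ≤ (a*s)⁻¹, hence a*s ≤ 2*b*s₀
    have h2 : (2*b*s₀)⁻¹ ≤ (a*s)⁻¹ := by
      rw [mul_inv, mul_inv, mul_inv]
      have hb2 : b⁻¹ / 2 ≤ b⁻¹ - M₁ := by linarith
      have h3 : b⁻¹/2 * s₀⁻¹ ≤ (a⁻¹ - M₁) * s⁻¹ :=
        le_trans (mul_le_mul_of_nonneg_right hb2 (by positivity)) h1
      have h4 : (a⁻¹ - M₁) * s⁻¹ ≤ a⁻¹ * s⁻¹ := by
        have : a⁻¹ - M₁ ≤ a⁻¹ := by linarith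
        exact mul_le_mul_of_nonneg_right this (by positivity)
      calc 2⁻¹ * b⁻¹ * s₀⁻¹ = b⁻¹/2 * s₀⁻¹ := by ring
        _ ≤ a⁻¹ * s⁻¹ := le_trans h3 h4
    have h5 : a * s ≤ 2 * b * s₀ := by
      have hpos1 : (0:ℝ) < a * s := by positivity
      have hpos2 : (0:ℝ) < 2 * b * s₀ := by positivity
      exact (inv_le_inv₀ hpos2 hpos1).mp h2
    have ha2 : a ^ 2 = y t := Real.sq_sqrt hyt.le
    have hb2 : b ^ 2 = y t₀ := Real.sq_sqrt hy0.le
    have hs2 : s ^ 2 = t := Real.sq_sqrt htp.le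
    have hs02 : s₀ ^ 2 = t₀ := Real.sq_sqrt ht₀.le
    nlinarith [mul_le_mul h5 h5 (by positivity) (by positivity)]
end

section
/- Let z : [t₀,∞) → (0, 1/M₁) be C¹ with t₀ > 0, satisfying z′/(z(1 − M₁z)) + 1/(2t) ≤ 0 pointwise. Then for all t ≥ t₀: t^{1/2}·z(t)·(1 − M₁·z(t₀)) ≤ t₀^{1/2}·z(t₀)·(1 − M₁·z(t)), and hence t·z(t)² ≤ t₀·z(t₀)²/(1 − M₁·z(t₀))². -/
/-!
The left side of the differential inequality is the derivative of
`log (√t · z / (1 - M₁ z)) = log z - log (1 - M₁ z) + (log t) / 2`, so `√t · z / (1 - M₁ z)` is nonincreasing on `[t₀, ∞)`; clearing denominators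
gives the first inequality. As `0 < 1 - M₁ z(t) ≤ 1`, it bounds `√t · z(t)` by
`√t₀ · z(t₀) / (1 - M₁ z(t₀))`, and squaring gives the second.
-/

open Real Set

lemma one_sub_mul_pos_of_lt_one_div {M x : ℝ} (hM : 0 < M) (hx : x < 1 / M) :
    0 < 1 - M * x := by
  rw [lt_div_iff₀ hM] at hx
  linarith

lemma antitoneOn_Ici_of_hasDerivAt_nonpos {a : ℝ} {f f' : ℝ → ℝ}
    (hf : ∀ x, a ≤ x → HasDerivAt f (f' x) x) (hf' : ∀ x, a ≤ x → f' x ≤ 0) :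
    AntitoneOn f (Ici a) :=
  antitoneOn_of_hasDerivWithinAt_nonpos (convex_Ici a)
    (fun x hx => (hf x hx).continuousAt.continuousWithinAt)
    (fun x hx => (hf x (interior_subset hx)).hasDerivWithinAt)
    (fun x hx => hf' x (interior_subset hx))

lemma hasDerivAt_log_sub_log_one_sub_mul {z : ℝ → ℝ} {z' M s : ℝ} (hz : HasDerivAt z z' s)
    (hpos : 0 < z s) (hpos' : 0 < 1 - M * z s) :
    HasDerivAt (fun x => log (z x) - log (1 - M * z x)) (z' / (z s * (1 - M * z s))) s := by
  refine ((hz.log hpos.ne').sub (((hz.const_mul M).const_sub 1).log hpos'.ne')).congr_deriv ?_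
  rw [neg_div, sub_neg_eq_add, div_add_div _ _ hpos.ne' hpos'.ne']
  ring

lemma log_sqrt_mul_div {s x q : ℝ} (hs : 0 < s) (hx : 0 < x) (hq : 0 < q) :
    log (√s * x / q) = log x - log q + log s / 2 := by
  rw [log_div (by positivity) hq.ne', log_mul (sqrt_pos.mpr hs).ne' hx.ne', log_sqrt hs.le]
  ring

theorem antitoneOn_sqrt_mul_div_one_sub_mul {t₀ M : ℝ} {z z' : ℝ → ℝ} (ht₀ : 0 < t₀)
    (hz : ∀ t, t₀ ≤ t → 0 < z t ∧ 0 < 1 - M * z t)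
    (hderiv : ∀ t, t₀ ≤ t → HasDerivAt z (z' t) t)
    (hineq : ∀ t, t₀ ≤ t → z' t / (z t * (1 - M * z t)) + 1 / (2 * t) ≤ 0) :
    AntitoneOn (fun t => √t * z t / (1 - M * z t)) (Ici t₀) := by
  have hlog : AntitoneOn (fun t => log (z t) - log (1 - M * z t) + log t / 2) (Ici t₀) := by
    refine antitoneOn_Ici_of_hasDerivAt_nonpos (fun t ht => ?_) hineq
    have ht0 : t ≠ 0 := (ht₀.trans_le ht).ne'
    refine ((hasDerivAt_log_sub_log_one_sub_mul (hderiv t ht) (hz t ht).1 (hz t ht).2).add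
      ((hasDerivAt_log ht0).div_const 2)).congr_deriv ?_
    ring
  intro a ha b hb hab
  have ha0 : 0 < a := ht₀.trans_le ha
  have hb0 : 0 < b := ht₀.trans_le hb
  obtain ⟨hza, hqa⟩ := hz a ha
  obtain ⟨hzb, hqb⟩ := hz b hb
  rw [← log_le_log_iff (by positivity) (by positivity), log_sqrt_mul_div hb0 hzb hqb,
    log_sqrt_mul_div ha0 hza hqa]
  exact hlog ha hb hab

theorem stmt_8_general (t₀ M₁ : ℝ) (ht₀ : 0 < t₀) (hM₁ : 0 < M₁)
    (z z' : ℝ → ℝ)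
    (hz : ∀ t, t₀ ≤ t → 0 < z t ∧ z t < 1 / M₁)
    (hderiv : ∀ t, t₀ ≤ t → HasDerivAt z (z' t) t)
    (hineq : ∀ t, t₀ ≤ t → z' t / (z t * (1 - M₁ * z t)) + 1 / (2 * t) ≤ 0) :
    ∀ t, t₀ ≤ t →
      Real.sqrt t * z t * (1 - M₁ * z t₀) ≤ Real.sqrt t₀ * z t₀ * (1 - M₁ * z t) ∧
      t * (z t) ^ 2 ≤ t₀ * (z t₀) ^ 2 / (1 - M₁ * z t₀) ^ 2 := by
  intro t ht
  have hpos : ∀ s, t₀ ≤ s → 0 < z s ∧ 0 < 1 - M₁ * z s :=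
    fun s hs => ⟨(hz s hs).1, one_sub_mul_pos_of_lt_one_div hM₁ (hz s hs).2⟩
  obtain ⟨hz₀, hq₀⟩ := hpos t₀ le_rfl
  obtain ⟨hzt, hqt⟩ := hpos t ht
  have hratio := antitoneOn_sqrt_mul_div_one_sub_mul ht₀ hpos hderiv hineq self_mem_Ici ht ht
  have hcross := (div_le_div_iff₀ hqt hq₀).mp hratio
  refine ⟨hcross, ?_⟩
  have hsqrt : √t * z t ≤ √t₀ * z t₀ / (1 - M₁ * z t₀) := by
    rw [le_div_iff₀ hq₀]
    exact hcross.trans (mul_le_of_le_one_right (by positivity)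
      (sub_le_self _ (mul_pos hM₁ hzt).le))
  calc t * z t ^ 2 = (√t * z t) ^ 2 := by rw [mul_pow, sq_sqrt (ht₀.trans_le ht).le]
    _ ≤ (√t₀ * z t₀ / (1 - M₁ * z t₀)) ^ 2 := pow_le_pow_left₀ (by positivity) hsqrt 2
    _ = t₀ * z t₀ ^ 2 / (1 - M₁ * z t₀) ^ 2 := by rw [div_pow, mul_pow, sq_sqrt ht₀.le]

/-- Integrated form of the corrected-energy inequality: if `z : [t₀,∞) → (0, 1/M₁)`
is `C¹` with `z′/(z(1 − M₁z)) + 1/(2t) ≤ 0`, then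
`t^{1/2}·z(t)·(1 − M₁·z(t₀)) ≤ t₀^{1/2}·z(t₀)·(1 − M₁·z(t))`, hence
`t·z(t)² ≤ t₀·z(t₀)²/(1 − M₁·z(t₀))²`. -/
theorem stmt_8 (t₀ M₁ : ℝ) (ht₀ : 0 < t₀) (hM₁ : 0 < M₁)
    (z z' : ℝ → ℝ)
    (hz : ∀ t, t₀ ≤ t → 0 < z t ∧ z t < 1 / M₁)
    (hderiv : ∀ t, t₀ ≤ t → HasDerivAt z (z' t) t)
    (hcont : ContinuousOn z' (Set.Ici t₀))
    (hineq : ∀ t, t₀ ≤ t → z' t / (z t * (1 - M₁ * z t)) + 1 / (2 * t) ≤ 0) :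
    ∀ t, t₀ ≤ t →
      Real.sqrt t * z t * (1 - M₁ * z t₀) ≤ Real.sqrt t₀ * z t₀ * (1 - M₁ * z t) ∧
      t * (z t) ^ 2 ≤ t₀ * (z t₀) ^ 2 / (1 - M₁ * z t₀) ^ 2 :=
  stmt_8_general t₀ M₁ ht₀ hM₁ z z' hz hderiv hineq
end

section
/- Suppose N ∈ C²(Σ) on a compact manifold satisfies ΔN − αN = −e^{2λ}·∂_tτ pointwise, where α ≥ ½e^{2λ}τ² > 0 and ∂_tτ > 0 is constant in space. Then at a point x_M where N attains its maximum N_M, N_M ≤ (α^{−1}e^{2λ}∂_tτ)(x_M), and a fortiori N_M ≤ 2·∂_tτ/τ². In particular with the gauge t = −1/τ (so ∂_tτ = τ²), N ≤ 2 everywhere. -/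
/-- Maximum-principle upper bound for the lapse: if `N ∈ C²` satisfies
`ΔN − αN = −e^{2λ}∂_tτ` with `α ≥ ½e^{2λ}τ² > 0` and `∂_tτ > 0` constant in
space, then at a maximum point `x_M` (where `ΔN ≤ 0`) one has
`N_M ≤ (α⁻¹e^{2λ}∂_tτ)(x_M)`, a fortiori `N_M ≤ 2∂_tτ/τ²`; in particular with
the gauge `∂_tτ = τ²`, `N ≤ 2` everywhere.  The Laplacian of `N` is abstracted
as the function `Lap`. -/
theorem stmt_16 {S : Type*} (N Lap α lam : S → ℝ) (τ τ' : ℝ) (hτ : τ ≠ 0)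
    (hτ' : 0 < τ')
    (hα : ∀ x, (1 / 2) * Real.exp (2 * lam x) * τ ^ 2 ≤ α x)
    (heq : ∀ x, Lap x - α x * N x = -(Real.exp (2 * lam x) * τ'))
    (xM : S) (hmax : ∀ x, N x ≤ N xM)
    (hmaxprin : Lap xM ≤ 0) :
    N xM ≤ (α xM)⁻¹ * Real.exp (2 * lam xM) * τ' ∧
    N xM ≤ 2 * τ' / τ ^ 2 ∧
    (τ' = τ ^ 2 → ∀ x, N x ≤ 2) := by
  have hτ2 : 0 < τ ^ 2 := by positivity
  have hαpos : 0 < α xM := lt_of_lt_of_le (by positivity) (hα xM)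
  have h1 : α xM * N xM ≤ Real.exp (2 * lam xM) * τ' := by
    have := heq xM; nlinarith
  have hbound1 : N xM ≤ (α xM)⁻¹ * Real.exp (2 * lam xM) * τ' := by
    rw [mul_assoc, ← div_eq_inv_mul, le_div_iff₀ hαpos]; linarith [h1]
  have hbound2 : N xM ≤ 2 * τ' / τ ^ 2 := by
    rw [le_div_iff₀ hτ2]
    nlinarith [hα xM, Real.exp_pos (2 * lam xM)]
  refine ⟨hbound1, hbound2, fun hg x => ?_⟩
  have : N xM ≤ 2 := by rw [hg] at hbound2; rw [mul_div_assoc, div_self hτ2.ne'] at hbound2; linarith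
  linarith [hmax x]
end
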